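/- Let n ≥ 2, r₀ > 0, let ν ∈ ℝⁿ be a nonzero vector, and let g : ℂⁿ → ℂ be analytic on the open ball B(0,r₀) ⊆ ℂⁿ. If g(q) + (∇g(q))·q = 0 for every q ∈ 𝒞(r₀), then g(p) = 0 for every p ∈ 𝒞(r₀). (This is the key step in the proof of Theorem 6.3: combining the scaling invariance of 𝒞(r₀) under multiplication by η ∈ (0,1] with the radial integral formula g(p) = ∫₀¹ [g(ηp) + (∇g(ηp))·(ηp)] dη.) -/

import Mathlib

open scoped BigOperators

noncomputable section

/-- Bilinear (non-Hermitian) dot product on ℂⁿ. -/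
def dotC {n : ℕ} (p q : EuclideanSpace ℂ (Fin n)) : ℂ := ∑ j, p j * q j

/-- A real vector viewed inside ℂⁿ. -/
def cplx {n : ℕ} (v : EuclideanSpace ℝ (Fin n)) : EuclideanSpace ℂ (Fin n) :=
  (WithLp.equiv 2 (Fin n → ℂ)).symm (fun j => (v j : ℂ))

/-- Gradient of a function g : ℂⁿ → ℂ, so that the derivative at q is the
linear map ξ ↦ (∇g(q))·ξ. -/
def gradV {n : ℕ} (g : EuclideanSpace ℂ (Fin n) → ℂ)
    (q : EuclideanSpace ℂ (Fin n)) : EuclideanSpace ℂ (Fin n) :=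
  (WithLp.equiv 2 (Fin n → ℂ)).symm
    (fun j => fderiv ℂ g q (EuclideanSpace.single j 1))

/-- The set 𝒞(r₀) of small isotropic vectors not orthogonal to ν. -/
def Ccone (n : ℕ) (r₀ : ℝ) (ν : EuclideanSpace ℝ (Fin n)) :
    Set (EuclideanSpace ℂ (Fin n)) :=
  {p | ‖p‖ < r₀ ∧ dotC p p = 0 ∧ dotC p (cplx ν) ≠ 0}

lemma dotC_smul_left {n : ℕ} (z : ℂ) (p q : EuclideanSpace ℂ (Fin n)) :
    dotC (z • p) q = z * dotC p q := by
  simp only [dotC, Finset.mul_sum, PiLp.smul_apply, smul_eq_mul]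
  exact Finset.sum_congr rfl fun i _ => by ring

lemma dotC_smul_right {n : ℕ} (z : ℂ) (p q : EuclideanSpace ℂ (Fin n)) :
    dotC p (z • q) = z * dotC p q := by
  simp only [dotC, Finset.mul_sum, PiLp.smul_apply, smul_eq_mul]
  exact Finset.sum_congr rfl fun i _ => by ring

lemma dotC_grad {n : ℕ} (g : EuclideanSpace ℂ (Fin n) → ℂ)
    (q : EuclideanSpace ℂ (Fin n)) (p : EuclideanSpace ℂ (Fin n)) :
    dotC (gradV g q) p = fderiv ℂ g q p := by
  have hp : ∑ j, p j • EuclideanSpace.single j (1:ℂ) = p := by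
    ext j
    rw [WithLp.ofLp_sum, Finset.sum_apply]
    simp [EuclideanSpace.single_apply, Finset.sum_ite_eq]
  calc dotC (gradV g q) p
      = ∑ j, fderiv ℂ g q (p j • EuclideanSpace.single j (1:ℂ)) := by
        have hgq : ∀ x, gradV g q x = fderiv ℂ g q (EuclideanSpace.single x 1) :=
          fun x => rfl
        simp [dotC, hgq, mul_comm, smul_eq_mul]
    _ = fderiv ℂ g q p := by rw [← map_sum, hp]

/-- Key step in the proof of Theorem 6.3: if g(q) + ∇g(q)·q vanishes on 𝒞(r₀),
then g vanishes on 𝒞(r₀). -/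
theorem vanishing_on_cone {n : ℕ} (hn : 2 ≤ n) {r₀ : ℝ} (hr₀ : 0 < r₀)
    (ν : EuclideanSpace ℝ (Fin n)) (hν : ν ≠ 0)
    (g : EuclideanSpace ℂ (Fin n) → ℂ)
    (hg : DifferentiableOn ℂ g (Metric.ball (0 : EuclideanSpace ℂ (Fin n)) r₀))
    (h : ∀ q ∈ Ccone n r₀ ν, g q + dotC (gradV g q) q = 0) :
    ∀ p ∈ Ccone n r₀ ν, g p = 0 := by
  intro p hp
  obtain ⟨hpn, hpp, hpν⟩ := hp
  set φ : ℝ → ℂ := fun t => (t : ℂ) * g ((t : ℂ) • p) with hφ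
  -- membership of scalings in the ball
  have hball : ∀ t : ℝ, |t| ≤ 1 →
      ((t : ℂ) • p) ∈ Metric.ball (0 : EuclideanSpace ℂ (Fin n)) r₀ := by
    intro t ht
    rw [Metric.mem_ball, dist_zero_right, norm_smul, Complex.norm_real,
      Real.norm_eq_abs]
    calc |t| * ‖p‖ ≤ 1 * ‖p‖ := by
          apply mul_le_mul_of_nonneg_right ht (norm_nonneg p)
      _ = ‖p‖ := one_mul _
      _ < r₀ := hpn
  have hdiff : ∀ t : ℝ, |t| ≤ 1 → DifferentiableAt ℂ g ((t : ℂ) • p) := fun t ht =>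
    hg.differentiableAt (Metric.isOpen_ball.mem_nhds (hball t ht))
  -- membership of scalings in the cone
  have hmem : ∀ t : ℝ, t ∈ Set.Ioc (0:ℝ) 1 → ((t : ℂ) • p) ∈ Ccone n r₀ ν := by
    intro t ht
    have habs : |t| ≤ 1 := abs_le.2 ⟨by linarith [ht.1], ht.2⟩
    refine ⟨by simpa [dist_zero_right] using hball t habs, ?_, ?_⟩
    · rw [dotC_smul_left, dotC_smul_right, hpp]; ring
    · rw [dotC_smul_left]
      exact mul_ne_zero (by exact_mod_cast ne_of_gt ht.1) hpν
  -- derivative of φ vanishes on (0,1]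
  have hderiv : ∀ t ∈ Set.Ioc (0:ℝ) 1, HasDerivAt φ 0 t := by
    intro t ht
    have habs : |t| ≤ 1 := abs_le.2 ⟨by linarith [ht.1], ht.2⟩
    have hd := hdiff t habs
    have h1 : HasDerivAt (fun z : ℂ => z • p) ((1:ℂ) • p) (t : ℂ) :=
      (hasDerivAt_id (t : ℂ)).smul_const p
    rw [one_smul] at h1
    have h2 : HasDerivAt (fun z : ℂ => g (z • p))
        (fderiv ℂ g ((t : ℂ) • p) p) (t : ℂ) :=
      hd.hasFDerivAt.comp_hasDerivAt _ h1
    have h3 : HasDerivAt (fun z : ℂ => z * g (z • p))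
        (1 * g ((t : ℂ) • p) + (t : ℂ) * fderiv ℂ g ((t : ℂ) • p) p) (t : ℂ) :=
      (hasDerivAt_id (t : ℂ)).mul h2
    have hval : 1 * g ((t : ℂ) • p) + (t : ℂ) * fderiv ℂ g ((t : ℂ) • p) p = 0 := by
      have hq := h _ (hmem t ht)
      rw [one_mul, ← dotC_grad g _ p]
      have : dotC (gradV g ((t : ℂ) • p)) ((t : ℂ) • p)
          = (t : ℂ) * dotC (gradV g ((t : ℂ) • p)) p := dotC_smul_right _ _ _
      rw [this] at hq
      linear_combination hq
    rw [hval] at h3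
    exact h3.comp_ofReal
  -- φ is constant on (0,1]
  have hconst : ∀ ε ∈ Set.Ioc (0:ℝ) 1, φ ε = φ 1 := by
    intro ε hε
    have hc : ContinuousOn φ (Set.Icc ε 1) := by
      intro x hx
      have hx' : x ∈ Set.Ioc (0:ℝ) 1 := ⟨lt_of_lt_of_le hε.1 hx.1, hx.2⟩
      exact ((hderiv x hx').continuousAt).continuousWithinAt
    have := constant_of_has_deriv_right_zero hc (fun x hx =>
      ((hderiv x ⟨lt_of_lt_of_le hε.1 hx.1, le_of_lt hx.2⟩).hasDerivWithinAt))
    exact (this 1 ⟨hε.2, le_refl 1⟩).symm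
  -- φ tends to 0 at 0⁺
  have hzero : Filter.Tendsto φ (nhdsWithin 0 (Set.Ioi 0)) (nhds 0) := by
    have hg0 : ContinuousAt g ((0:ℝ) • p : EuclideanSpace ℂ (Fin n)) := by
      exact_mod_cast (hdiff 0 (by norm_num)).continuousAt
    have hcont : ContinuousAt φ 0 := by
      apply ContinuousAt.mul
      · exact Complex.continuous_ofReal.continuousAt
      · refine ContinuousAt.comp ?_ ?_
        · simpa using hg0
        · exact (Complex.continuous_ofReal.smul continuous_const).continuousAt
    have h0 : φ 0 = 0 := by simp [hφ]
    rw [← h0]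
    exact hcont.continuousWithinAt
  -- conclude φ 1 = 0
  have hne : (nhdsWithin (0:ℝ) (Set.Ioi 0)).NeBot := nhdsGT_neBot 0
  have hev : ∀ᶠ t in nhdsWithin (0:ℝ) (Set.Ioi 0), φ t = φ 1 := by
    filter_upwards [Ioc_mem_nhdsGT_of_mem (Set.mem_Ico.2 ⟨le_refl 0, one_pos⟩)]
      with t ht using hconst t ht
  have : Filter.Tendsto φ (nhdsWithin 0 (Set.Ioi 0)) (nhds (φ 1)) :=
    Filter.Tendsto.congr' (Filter.EventuallyEq.symm hev) tendsto_const_nhds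
  have h10 : φ 1 = 0 := tendsto_nhds_unique this hzero
  simpa [hφ] using h10
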